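/- arXiv:1607.00932 — 4 statements merged into one kernel-verified Lean document; each statement's English description precedes it below -/
import Mathlib

section
/- For every positive integer n and m ≤ n/2, the partial sum of binomial coefficients satisfies Σ_{i=0}^{m} C(n,i) ≤ 2^{n·H(m/n)}, where H is the binary entropy function. -/
/-- The binary entropy function `H(p) = -p log₂ p - (1-p) log₂ (1-p)`
(with the convention `H(0) = 0`). -/
noncomputable def binEntropy (p : ℝ) : ℝ :=
  -p * Real.logb 2 p - (1 - p) * Real.logb 2 (1 - p)

/-! With `p = m / n ≤ 1/2`, every term `p ^ i * (1 - p) ^ (n - i)` with `i ≤ m` is at least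
`p ^ m * (1 - p) ^ (n - m) = 2 ^ (-n H(p))`, while all `n + 1` binomial terms
`C(n, i) p ^ i (1 - p) ^ (n - i)` sum to `(p + (1 - p)) ^ n = 1`. -/

open Finset

lemma pow_mul_pow_sub_le_pow_mul_pow_sub {R : Type*} [CommSemiring R] [PartialOrder R]
    [IsOrderedRing R] {a b : R} (ha : 0 ≤ a) (hab : a ≤ b) {i m n : ℕ} (him : i ≤ m)
    (hmn : m ≤ n) : a ^ m * b ^ (n - m) ≤ a ^ i * b ^ (n - i) := by
  obtain ⟨k, rfl⟩ := Nat.exists_eq_add_of_le him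
  calc a ^ (i + k) * b ^ (n - (i + k)) = a ^ i * (a ^ k * b ^ (n - (i + k))) := by ring
    _ ≤ a ^ i * (b ^ k * b ^ (n - (i + k))) := by
        have := ha.trans hab
        gcongr
    _ = a ^ i * b ^ (n - i) := by rw [← pow_add]; congr 2; omega

lemma sum_range_choose_mul_pow_mul_one_sub_pow {R : Type*} [CommRing R] (p : R) (n : ℕ) :
    ∑ i ∈ range (n + 1), (n.choose i : R) * (p ^ i * (1 - p) ^ (n - i)) = 1 := by
  simpa [mul_comm, mul_left_comm] using (add_pow p (1 - p) n).symm

lemma sum_range_choose_mul_pow_mul_one_sub_pow_le_one {p : ℝ} (hp : 0 ≤ p) (hp2 : p ≤ 1 / 2)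
    {m n : ℕ} (hmn : m ≤ n) :
    (∑ i ∈ range (m + 1), (n.choose i : ℝ)) * (p ^ m * (1 - p) ^ (n - m)) ≤ 1 := by
  rw [sum_mul]
  calc ∑ i ∈ range (m + 1), (n.choose i : ℝ) * (p ^ m * (1 - p) ^ (n - m))
      ≤ ∑ i ∈ range (m + 1), (n.choose i : ℝ) * (p ^ i * (1 - p) ^ (n - i)) := by
        refine sum_le_sum fun i hi ↦ mul_le_mul_of_nonneg_left ?_ (Nat.cast_nonneg _)
        exact pow_mul_pow_sub_le_pow_mul_pow_sub hp (by linarith)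
          (Nat.lt_succ_iff.mp (mem_range.mp hi)) hmn
    _ ≤ ∑ i ∈ range (n + 1), (n.choose i : ℝ) * (p ^ i * (1 - p) ^ (n - i)) := by
        have : 0 ≤ 1 - p := by linarith
        exact sum_le_sum_of_subset_of_nonneg (range_subset_range.mpr (by omega))
          fun _ _ _ ↦ by positivity
    _ = 1 := sum_range_choose_mul_pow_mul_one_sub_pow p n

lemma two_rpow_mul_binEntropy {p : ℝ} (hp0 : 0 < p) (hp1 : p < 1) (x : ℝ) :
    (2 : ℝ) ^ (x * binEntropy p) = (p ^ (x * p) * (1 - p) ^ (x * (1 - p)))⁻¹ := by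
  have hq : 0 < 1 - p := by linarith
  have hexp : x * binEntropy p =
      -(Real.logb 2 p * (x * p) + Real.logb 2 (1 - p) * (x * (1 - p))) := by
    unfold binEntropy; ring
  rw [hexp, Real.rpow_neg zero_le_two, Real.rpow_add two_pos, Real.rpow_mul zero_le_two,
    Real.rpow_mul zero_le_two, Real.rpow_logb two_pos (by norm_num) hp0,
    Real.rpow_logb two_pos (by norm_num) hq]

theorem sum_choose_le_two_rpow_entropy_general (n m : ℕ) (hm : (m : ℝ) ≤ (n : ℝ) / 2) :
    (∑ i ∈ Finset.range (m + 1), (n.choose i : ℝ))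
      ≤ 2 ^ ((n : ℝ) * binEntropy ((m : ℝ) / (n : ℝ))) := by
  rcases Nat.eq_zero_or_pos m with rfl | hm0
  · simp [binEntropy]
  have hmR : (0 : ℝ) < m := by exact_mod_cast hm0
  have hn : (0 : ℝ) < n := by linarith
  have hmn : m ≤ n := by exact_mod_cast (show (m : ℝ) ≤ n by linarith)
  set p : ℝ := m / n
  have hp2 : p ≤ 1 / 2 := by rw [div_le_iff₀ hn]; linarith
  have hnp : (n : ℝ) * p = m := mul_div_cancel₀ _ hn.ne'
  have hnq : (n : ℝ) * (1 - p) = (n - m : ℕ) := by push_cast [hmn]; rw [mul_sub, hnp, mul_one]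
  have hq : 0 < 1 - p := by linarith
  rw [two_rpow_mul_binEntropy (by positivity) (by linarith), hnp, hnq, Real.rpow_natCast,
    Real.rpow_natCast, ← one_div, le_div_iff₀ (by positivity)]
  exact sum_range_choose_mul_pow_mul_one_sub_pow_le_one (by positivity) hp2 hmn

/-- For every positive integer `n` and `m ≤ n/2`,
`Σ_{i=0}^{m} C(n,i) ≤ 2^(n·H(m/n))`. -/
theorem sum_choose_le_two_rpow_entropy (n m : ℕ) (hn : 0 < n) (hm : (m : ℝ) ≤ (n : ℝ) / 2) :
    (∑ i ∈ Finset.range (m + 1), (n.choose i : ℝ))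
      ≤ 2 ^ ((n : ℝ) * binEntropy ((m : ℝ) / (n : ℝ))) :=
  sum_choose_le_two_rpow_entropy_general n m hm
end

section
/- Fix S ∈ {0,1}^m with Hamming weight |S| = q, and let ℓ ∈ {q,...,T}. Then the number of tuples (i₁,...,i_ℓ) ∈ [m]^ℓ with e_{i₁} ⊕ ⋯ ⊕ e_{i_ℓ} = S is 0 if ℓ − q is odd, and is at most ℓ! · m^{(ℓ−q)/2} / (2^{(ℓ−q)/2} · ((ℓ−q)/2)!) if ℓ − q is even. -/
/-!
Let `N(ℓ, S)` be the number of tuples of length `ℓ` whose basis vectors add up to `S`. Summing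
all coordinates gives `ℓ ≡ |S| (mod 2)` whenever `N(ℓ, S) ≠ 0`, and a tuple must hit every
coordinate in the support of `S`, so `N(ℓ, S) = 0` for `ℓ < |S|`.

For the bound, splitting off the first index gives `N(ℓ + 1, S) = ∑ⱼ N(ℓ, S + eⱼ)`, and
`|S + eⱼ| = |S| ∓ 1` according as `j` lies in the support of `S` or not. With
`B(ℓ, k) = ℓ! mᵏ / (2ᵏ k!)` and `|S| = q`, `ℓ + 1 = q + 2k`, induction bounds the sum by
`q B(ℓ, k) + m B(ℓ, k - 1) = (q + 2k) B(ℓ, k) = B(ℓ + 1, k)`.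
-/

open Finset

theorem sum_zmod_two_eq_hammingNorm {ι : Type*} [Fintype ι] (S : ι → ZMod 2) :
    ∑ i, S i = hammingNorm S := by
  have hone : ∀ i ∈ ({i | S i ≠ 0} : Finset ι), S i = 1 := fun i hi =>
    Fin.eq_one_of_ne_zero _ (mem_filter.mp hi).2
  rw [← sum_filter_ne_zero, sum_congr rfl hone, sum_const, nsmul_one]
  rfl

theorem add_single_add_single {α R : Type*} [DecidableEq α] [Ring R] [CharP R 2]
    (S : α → R) (j : α) : S + Pi.single j 1 + Pi.single j 1 = S := by
  rw [add_assoc, ← Pi.single_add, CharTwo.add_self_eq_zero, Pi.single_zero, add_zero]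

section TuplesWithParity

variable {α : Type*} [DecidableEq α]

/-- `parityVector t` is `e_{t 0} ⊕ ⋯ ⊕ e_{t (ℓ - 1)}`. -/
def parityVector {ℓ : ℕ} (t : Fin ℓ → α) : α → ZMod 2 :=
  fun j => ∑ r, if t r = j then 1 else 0

theorem parityVector_eq_single_add_tail {ℓ : ℕ} (t : Fin (ℓ + 1) → α) :
    parityVector t = Pi.single (t 0) 1 + parityVector (Fin.tail t) := by
  funext i
  simp only [parityVector, Fin.sum_univ_succ, Pi.add_apply, Pi.single_apply, Fin.tail, eq_comm]

variable [Fintype α]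

theorem hammingNorm_add_single_of_eq_zero {S : α → ZMod 2} {j : α} (hj : S j = 0) :
    hammingNorm (S + Pi.single j 1) = hammingNorm S + 1 := by
  rw [hammingNorm, hammingNorm,
    ← card_insert_of_notMem (s := {i | S i ≠ 0}) (a := j) (by simp [hj])]
  congr 1
  ext i
  rcases eq_or_ne i j with rfl | hij <;> simp [*]

theorem hammingNorm_add_single_of_ne_zero {S : α → ZMod 2} {j : α} (hj : S j ≠ 0) :
    hammingNorm (S + Pi.single j 1) + 1 = hammingNorm S := by
  have hj1 : S j = 1 := Fin.eq_one_of_ne_zero _ hj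
  rw [hammingNorm, hammingNorm,
    ← card_erase_add_one (s := {i | S i ≠ 0}) (a := j) (by simp [hj])]
  congr 2
  ext i
  rcases eq_or_ne i j with rfl | hij <;> simp [*, CharTwo.add_self_eq_zero]

theorem sum_parityVector {ℓ : ℕ} (t : Fin ℓ → α) : ∑ j, parityVector t j = ℓ := by
  simp only [parityVector]
  rw [sum_comm]
  simp

def tuplesWithParity (ℓ : ℕ) (S : α → ZMod 2) : Finset (Fin ℓ → α) :=
  {t | parityVector t = S}

theorem natCast_eq_hammingNorm_of_mem_tuplesWithParity {ℓ : ℕ} {S : α → ZMod 2}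
    {t : Fin ℓ → α} (ht : t ∈ tuplesWithParity ℓ S) : (ℓ : ZMod 2) = hammingNorm S := by
  rw [← sum_zmod_two_eq_hammingNorm, ← (mem_filter.mp ht).2, sum_parityVector]

theorem hammingNorm_le_of_mem_tuplesWithParity {ℓ : ℕ} {S : α → ZMod 2}
    {t : Fin ℓ → α} (ht : t ∈ tuplesWithParity ℓ S) : hammingNorm S ≤ ℓ := by
  have hsupp : ({i | S i ≠ 0} : Finset α) ⊆ univ.image t := by
    intro i hi
    by_contra hni
    refine (mem_filter.mp hi).2 ?_
    rw [← (mem_filter.mp ht).2]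
    exact sum_eq_zero fun r _ =>
      if_neg fun (hr : t r = i) => hni (hr ▸ mem_image_of_mem t (mem_univ r))
  calc hammingNorm S ≤ #(univ.image t) := card_le_card hsupp
    _ ≤ ℓ := card_image_le.trans (by simp)

theorem tuplesWithParity_eq_empty_of_lt {ℓ : ℕ} {S : α → ZMod 2} (h : ℓ < hammingNorm S) :
    tuplesWithParity ℓ S = ∅ :=
  eq_empty_of_forall_notMem fun _ ht => (hammingNorm_le_of_mem_tuplesWithParity ht).not_gt h

theorem card_tuplesWithParity_eq_zero_of_odd {ℓ : ℕ} {S : α → ZMod 2}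
    (h : Odd (ℓ - hammingNorm S)) : #(tuplesWithParity ℓ S) = 0 := by
  rw [card_eq_zero, eq_empty_iff_forall_notMem]
  intro t ht
  have hle := hammingNorm_le_of_mem_tuplesWithParity ht
  have hmod := (ZMod.natCast_eq_natCast_iff' _ _ _).mp
    (natCast_eq_hammingNorm_of_mem_tuplesWithParity ht)
  rw [Nat.odd_iff] at h
  omega

theorem card_tuplesWithParity_succ (ℓ : ℕ) (S : α → ZMod 2) :
    #(tuplesWithParity (ℓ + 1) S) = ∑ j, #(tuplesWithParity ℓ (S + Pi.single j 1)) := by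
  rw [← card_sigma]
  refine (card_nbij' (fun p => Fin.cons p.1 p.2) (fun t => ⟨t 0, Fin.tail t⟩) ?_ ?_ ?_ ?_).symm
  · intro p hp
    simp only [tuplesWithParity, coe_sigma, Set.mem_sigma_iff, mem_coe, mem_filter, mem_univ,
      true_and] at hp ⊢
    rw [parityVector_eq_single_add_tail, Fin.cons_zero, Fin.tail_cons, hp,
      add_comm (Pi.single _ _), add_single_add_single]
  · intro t ht
    simp only [tuplesWithParity, coe_sigma, Set.mem_sigma_iff, mem_coe, mem_filter, mem_univ,
      true_and] at ht ⊢
    rw [parityVector_eq_single_add_tail] at ht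
    rw [← ht, add_comm (Pi.single _ _), add_single_add_single]
  · intro p _
    simp
  · intro t _
    simp

open Nat in
theorem card_tuplesWithParity_mul_le (ℓ k : ℕ) (S : α → ZMod 2)
    (h : hammingNorm S + 2 * k = ℓ) :
    #(tuplesWithParity ℓ S) * (2 ^ k * k !) ≤ ℓ ! * Fintype.card α ^ k := by
  induction ℓ generalizing k S with
  | zero =>
    obtain rfl : k = 0 := by omega
    simpa using card_le_univ (tuplesWithParity 0 S)
  | succ ℓ ih =>
    set m := Fintype.card α
    have hones :
        ∑ j : α with S j ≠ 0, #(tuplesWithParity ℓ (S + Pi.single j 1)) * (2 ^ k * k !)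
          ≤ hammingNorm S * (ℓ ! * m ^ k) := by
      refine (sum_le_card_nsmul _ _ _ fun j hj => ih k _ ?_).trans_eq (smul_eq_mul _ _)
      have := hammingNorm_add_single_of_ne_zero (mem_filter.mp hj).2
      omega
    have hzeros :
        ∑ j : α with S j = 0, #(tuplesWithParity ℓ (S + Pi.single j 1)) * (2 ^ k * k !)
          ≤ 2 * k * (ℓ ! * m ^ k) := by
      cases k with
      | zero =>
        rw [mul_zero, zero_mul, nonpos_iff_eq_zero]
        refine sum_eq_zero fun j hj => ?_
        rw [tuplesWithParity_eq_empty_of_lt, card_empty, zero_mul]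
        have := hammingNorm_add_single_of_eq_zero (mem_filter.mp hj).2
        omega
      | succ k =>
        have hterm : ∀ j ∈ ({j | S j = 0} : Finset α),
            #(tuplesWithParity ℓ (S + Pi.single j 1)) * (2 ^ (k + 1) * (k + 1)!)
              ≤ 2 * (k + 1) * (ℓ ! * m ^ k) := by
          intro j hj
          have := hammingNorm_add_single_of_eq_zero (mem_filter.mp hj).2
          have := ih k (S + Pi.single j 1) (by omega)
          rw [factorial_succ, pow_succ]
          nlinarith
        calc _ ≤ #({j | S j = 0} : Finset α) * (2 * (k + 1) * (ℓ ! * m ^ k)) := by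
              simpa using sum_le_card_nsmul _ _ _ hterm
          _ ≤ m * (2 * (k + 1) * (ℓ ! * m ^ k)) := by gcongr; exact card_le_univ _
          _ = _ := by ring
    calc #(tuplesWithParity (ℓ + 1) S) * (2 ^ k * k !)
        = ∑ j, #(tuplesWithParity ℓ (S + Pi.single j 1)) * (2 ^ k * k !) := by
          rw [card_tuplesWithParity_succ, sum_mul]
      _ = _ := (sum_filter_add_sum_filter_not _ (fun j => S j = 0) _).symm
      _ ≤ 2 * k * (ℓ ! * m ^ k) + hammingNorm S * (ℓ ! * m ^ k) :=
          Nat.add_le_add hzeros hones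
      _ = (ℓ + 1)! * m ^ k := by rw [factorial_succ, ← h]; ring

theorem card_tuplesWithParity_le {ℓ k : ℕ} {S : α → ZMod 2}
    (h : hammingNorm S + 2 * k = ℓ) :
    (#(tuplesWithParity ℓ S) : ℝ) ≤ ℓ.factorial * (Fintype.card α : ℝ) ^ k
      / (2 ^ k * k.factorial) := by
  rw [le_div_iff₀ (by positivity)]
  exact_mod_cast card_tuplesWithParity_mul_le ℓ k S h

end TuplesWithParity

theorem count_tuples_sum_basis_eq_general {m q ℓ : ℕ} (S : Fin m → ZMod 2)
    (hq : hammingNorm S = q) (hqℓ : q ≤ ℓ) :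
    (Odd (ℓ - q) →
        (Finset.univ.filter (fun t : Fin ℓ → Fin m =>
          (fun j => ∑ r : Fin ℓ, if t r = j then (1 : ZMod 2) else 0) = S)).card = 0) ∧
      (Even (ℓ - q) →
        ((Finset.univ.filter (fun t : Fin ℓ → Fin m =>
            (fun j => ∑ r : Fin ℓ, if t r = j then (1 : ZMod 2) else 0) = S)).card : ℝ)
          ≤ (Nat.factorial ℓ : ℝ) * (m : ℝ) ^ ((ℓ - q) / 2)
              / (2 ^ ((ℓ - q) / 2) * (Nat.factorial ((ℓ - q) / 2) : ℝ))) := by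
  subst hq
  refine ⟨card_tuplesWithParity_eq_zero_of_odd, fun ⟨k, hk⟩ => ?_⟩
  have hbound := card_tuplesWithParity_le (ℓ := ℓ) (S := S) (k := (ℓ - hammingNorm S) / 2)
    (by omega)
  rwa [Fintype.card_fin] at hbound

/-- The number of tuples `(i₁,...,i_ℓ) ∈ [m]^ℓ` with `e_{i₁} ⊕ ⋯ ⊕ e_{i_ℓ} = S`
(each coordinate `j` of `S` equals the parity of `#{r : i_r = j}`) is `0` if `ℓ - q`
is odd, and at most `ℓ! · m^((ℓ−q)/2) / (2^((ℓ−q)/2) · ((ℓ−q)/2)!)` if `ℓ - q` is even,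
where `q = |S|` is the Hamming weight of `S`. -/
theorem count_tuples_sum_basis_eq {m q ℓ T : ℕ} (S : Fin m → ZMod 2)
    (hq : hammingNorm S = q) (hqℓ : q ≤ ℓ) (hℓT : ℓ ≤ T) :
    (Odd (ℓ - q) →
        (Finset.univ.filter (fun t : Fin ℓ → Fin m =>
          (fun j => ∑ r : Fin ℓ, if t r = j then (1 : ZMod 2) else 0) = S)).card = 0) ∧
      (Even (ℓ - q) →
        ((Finset.univ.filter (fun t : Fin ℓ → Fin m =>
            (fun j => ∑ r : Fin ℓ, if t r = j then (1 : ZMod 2) else 0) = S)).card : ℝ)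
          ≤ (Nat.factorial ℓ : ℝ) * (m : ℝ) ^ ((ℓ - q) / 2)
              / (2 ^ ((ℓ - q) / 2) * (Nat.factorial ((ℓ - q) / 2) : ℝ))) :=
  count_tuples_sum_basis_eq_general S hq hqℓ
end

section
/- Let E = {(p_i, |ψ_i⟩)}_{i∈[m]} be an ensemble of pure states with Σp_i = 1, let |ψ'_i⟩ = √p_i |ψ_i⟩, ρ = Σ_i |ψ'_i⟩⟨ψ'_i|, and define the Pretty Good Measurement vectors |ν_i⟩ = ρ^{−1/2}|ψ'_i⟩ (inverse on the support of ρ). Then the optimal average success probability P^opt(E) of identifying the state over all POVMs satisfies P^opt(E)² ≤ P^{PGM}(E), where P^{PGM}(E) = Σ_i p_i |⟨ν_i|ψ_i⟩|² = Σ_i ⟨ψ'_i|ρ^{−1/2}|ψ'_i⟩². -/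
/-!
Write `ψ'ᵢ = √pᵢ ψᵢ`. Since `ψ'ᵢ` lies in the range of `ρ`, it is fixed by `ρR²`, so with the
fourth root `T = √(ρR)` of `ρ` and `wᵢ = T R ψ'ᵢ` we get `ψ'ᵢ = T wᵢ` and
`‖wᵢ‖² = ⟨ψ'ᵢ|R|ψ'ᵢ⟩`. Cauchy–Schwarz for the Hilbert–Schmidt inner product gives
`⟨ψ'ᵢ|Mᵢ|ψ'ᵢ⟩ = ⟨wᵢ|T Mᵢ T|wᵢ⟩ ≤ ‖T Mᵢ T‖₂ ‖wᵢ‖²`, and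
`‖T Mᵢ T‖₂² = tr(√ρ Mᵢ √ρ Mᵢ) ≤ tr(√ρ Mᵢ √ρ) = tr(Mᵢ ρ)` because `Mᵢ ≤ 1`.
Cauchy–Schwarz over `i`, together with `∑ᵢ tr(Mᵢ ρ) = tr ρ = 1`, finishes the proof.
-/

open Matrix
open scoped ComplexOrder MatrixOrder

namespace Matrix

variable {𝕜 n : Type*} [RCLike 𝕜] [Fintype n]

lemma norm_trace_mul_sq_le (A B : Matrix n n 𝕜) :
    ‖(A * B).trace‖ ^ 2 ≤ RCLike.re (A * Aᴴ).trace * RCLike.re (B * Bᴴ).trace := by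
  classical
  let _ := toMatrixSeminormedAddCommGroup (1 : Matrix n n 𝕜) PosSemidef.one
  let _ := toMatrixInnerProductSpace (1 : Matrix n n 𝕜) PosSemidef.one
  have hinner (X Y : Matrix n n 𝕜) : inner 𝕜 X Y = (Y * Xᴴ).trace := by
    have h : inner 𝕜 X Y = (Y * 1 * Xᴴ).trace := by with_unfolding_all rfl
    rwa [Matrix.mul_one] at h
  have h := inner_mul_inner_self_le (𝕜 := 𝕜) Bᴴ A
  rw [norm_inner_symm A, hinner, hinner, hinner, conjTranspose_conjTranspose,
    trace_mul_comm Bᴴ B, mul_comm (RCLike.re _)] at h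
  simpa only [sq] using h

lemma norm_dotProduct_mulVec_sq_le (B : Matrix n n 𝕜) (w : n → 𝕜) :
    ‖star w ⬝ᵥ B *ᵥ w‖ ^ 2 ≤ RCLike.re (B * Bᴴ).trace * ‖star w ⬝ᵥ w‖ ^ 2 := by
  have hW : (vecMulVec w (star w))ᴴ = vecMulVec w (star w) := by
    rw [conjTranspose_vecMulVec, star_star]
  have h := norm_trace_mul_sq_le B (vecMulVec w (star w))
  rw [hW, mul_vecMulVec, vecMulVec_mul_vecMulVec, trace_vecMulVec, trace_vecMulVec,
    dotProduct_comm, dotProduct_smul, dotProduct_comm w, smul_eq_mul] at h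
  obtain ⟨r, hr, hrw⟩ := RCLike.nonneg_iff_exists_ofReal.mp (dotProduct_star_self_nonneg w)
  rw [← hrw] at h ⊢
  rw [← RCLike.ofReal_mul, RCLike.ofReal_re, ← sq] at h
  rwa [RCLike.norm_of_nonneg hr]

lemma PosSemidef.trace_mul_nonneg {A B : Matrix n n 𝕜} (hA : A.PosSemidef) (hB : B.PosSemidef) :
    0 ≤ (A * B).trace := by
  classical
  obtain ⟨hsq, hsqH⟩ : CFC.sqrt A * CFC.sqrt A = A ∧ (CFC.sqrt A)ᴴ = CFC.sqrt A :=
    ⟨CFC.sqrt_mul_sqrt_self A hA.nonneg, (CFC.sqrt_nonneg A).posSemidef.isHermitian⟩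
  have h := (hB.mul_mul_conjTranspose_same (CFC.sqrt A)).trace_nonneg
  rwa [hsqH, trace_mul_cycle, hsq] at h

lemma PosSemidef.trace_mul_le_trace [DecidableEq n] {K M : Matrix n n 𝕜} (hK : K.PosSemidef)
    (hM : (1 - M).PosSemidef) : (K * M).trace ≤ K.trace := by
  simpa [mul_sub, trace_sub] using hK.trace_mul_nonneg hM

lemma PosSemidef.re_trace_conj_mul_conj_le [DecidableEq n] {T M : Matrix n n 𝕜}
    (hM : M.PosSemidef) (hT : Tᴴ = T) (hM1 : (1 - M).PosSemidef) :
    RCLike.re ((T * M * T) * (T * M * T)ᴴ).trace ≤ RCLike.re (M * (T * T * (T * T))).trace := by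
  have h := (hM.mul_mul_conjTranspose_same (T * T)).trace_mul_le_trace hM1
  rw [conjTranspose_mul, hT] at h
  have e1 : ((T * M * T) * (T * M * T)ᴴ).trace = (T * T * M * (T * T) * M).trace := by
    rw [conjTranspose_mul, conjTranspose_mul, hT, hM.isHermitian.eq,
      trace_mul_comm (T * T * M * (T * T)) M]
    simp only [Matrix.mul_assoc]
    rw [trace_mul_comm T]
    simp only [Matrix.mul_assoc]
  have e2 : (M * (T * T * (T * T))).trace = (T * T * M * (T * T)).trace := by
    rw [trace_mul_comm M, trace_mul_comm (T * T * M)]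
    simp only [Matrix.mul_assoc]
  rw [e1, e2]
  exact (RCLike.le_iff_re_im.mp h).1

lemma mulVec_eq_zero_of_mul_sum_vecMulVec_eq_zero {ι : Type*} [Fintype ι] {A : Matrix n n 𝕜}
    (v : ι → n → 𝕜) (h : A * ∑ i, vecMulVec (v i) (star (v i)) = 0) (i : ι) :
    A *ᵥ v i = 0 := by
  have htrace : ∑ j, star (A *ᵥ v j) ⬝ᵥ A *ᵥ v j = 0 := by
    have := congrArg (fun X => (X * Aᴴ).trace) h
    simpa [Finset.mul_sum, Finset.sum_mul, mul_vecMulVec, vecMulVec_mul, trace_vecMulVec,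
      star_mulVec, dotProduct_comm] using this
  exact dotProduct_star_self_eq_zero.mp <|
    (Finset.sum_eq_zero_iff_of_nonneg fun j _ => dotProduct_star_self_nonneg _).mp htrace i
      (Finset.mem_univ i)

lemma star_mulVec_dotProduct_mulVec_mulVec (A B : Matrix n n 𝕜) (x y : n → 𝕜) :
    star (A *ᵥ x) ⬝ᵥ B *ᵥ A *ᵥ y = star x ⬝ᵥ (Aᴴ * B * A) *ᵥ y := by
  rw [star_mulVec, dotProduct_mulVec, vecMul_vecMul, ← dotProduct_mulVec, mulVec_mulVec]

section PrettyGoodMeasurement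

variable {ρ R : Matrix n n 𝕜}

lemma mul_mul_mul_self_of_commute (hRρ : R * ρ = ρ * R) (hpinv : ρ * (R * R) * ρ = ρ) :
    ρ * R * (ρ * R) = ρ := by
  calc ρ * R * (ρ * R) = ρ * R * (R * ρ) := by rw [hRρ]
    _ = ρ := by simpa only [mul_assoc] using hpinv

lemma re_dotProduct_mulVec_sq_le_re_trace_mul_sq [DecidableEq n] (hρ : ρ.PosSemidef) (hR : R.PosSemidef)
    (hRρ : R * ρ = ρ * R) (hpinv : ρ * (R * R) * ρ = ρ) {M : Matrix n n 𝕜}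
    (hM : M.PosSemidef) (hM1 : (1 - M).PosSemidef) {v : n → 𝕜} (hv : (ρ * (R * R)) *ᵥ v = v) :
    RCLike.re (star v ⬝ᵥ M *ᵥ v) ^ 2 ≤
      RCLike.re (M * ρ).trace * RCLike.re (star v ⬝ᵥ R *ᵥ v) ^ 2 := by
  set T := CFC.sqrt (ρ * R)
  have hT : T * T = ρ * R :=
    CFC.sqrt_mul_sqrt_self _ (Commute.mul_nonneg hρ.nonneg hR.nonneg hRρ.symm)
  have hTH : Tᴴ = T := (CFC.sqrt_nonneg _).posSemidef.isHermitian
  obtain ⟨w, hTw, hw⟩ : ∃ w, T *ᵥ w = v ∧ star w ⬝ᵥ w = star v ⬝ᵥ R *ᵥ v := by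
    refine ⟨T *ᵥ R *ᵥ v, by rw [mulVec_mulVec, mulVec_mulVec, hT, mul_assoc, hv], ?_⟩
    have h := star_mulVec_dotProduct_mulVec_mulVec T 1 (R *ᵥ v) (R *ᵥ v)
    rw [one_mulVec] at h
    rw [h, hTH, Matrix.mul_one, hT, mulVec_mulVec, mul_assoc, hv, star_mulVec,
      ← dotProduct_mulVec, hR.isHermitian.eq]
  have hMw : star v ⬝ᵥ M *ᵥ v = star w ⬝ᵥ (T * M * T) *ᵥ w := by
    rw [← hTw, star_mulVec_dotProduct_mulVec_mulVec, hTH]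
  have hB : RCLike.re ((T * M * T) * (T * M * T)ᴴ).trace ≤ RCLike.re (M * ρ).trace := by
    simpa only [hT, mul_mul_mul_self_of_commute hRρ hpinv] using
      hM.re_trace_conj_mul_conj_le hTH hM1
  have hb : ‖star v ⬝ᵥ R *ᵥ v‖ = RCLike.re (star v ⬝ᵥ R *ᵥ v) := by
    obtain ⟨r, hr, hrz⟩ := RCLike.nonneg_iff_exists_ofReal.mp (hR.dotProduct_mulVec_nonneg v)
    rw [← hrz, RCLike.norm_of_nonneg hr, RCLike.ofReal_re]
  calc RCLike.re (star v ⬝ᵥ M *ᵥ v) ^ 2 ≤ ‖star v ⬝ᵥ M *ᵥ v‖ ^ 2 :=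
        sq_le_sq.mpr ((RCLike.abs_re_le_norm _).trans (le_abs_self _))
    _ ≤ RCLike.re ((T * M * T) * (T * M * T)ᴴ).trace * ‖star v ⬝ᵥ R *ᵥ v‖ ^ 2 := by
        rw [hMw, ← hw]
        exact norm_dotProduct_mulVec_sq_le _ _
    _ ≤ RCLike.re (M * ρ).trace * RCLike.re (star v ⬝ᵥ R *ᵥ v) ^ 2 := by
        rw [hb]
        exact mul_le_mul_of_nonneg_right hB (sq_nonneg _)

theorem sq_sum_re_dotProduct_mulVec_le_re_trace_mul_sum_sq {ι : Type*} [Fintype ι] [DecidableEq n] (v : ι → n → 𝕜)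
    (hρ : ρ = ∑ i, vecMulVec (v i) (star (v i))) (hR : R.PosSemidef) (hRρ : R * ρ = ρ * R)
    (hpinv : ρ * (R * R) * ρ = ρ) {M : ι → Matrix n n 𝕜} (hM : ∀ i, (M i).PosSemidef)
    (hMsum : ∑ i, M i = 1) :
    (∑ i, RCLike.re (star (v i) ⬝ᵥ M i *ᵥ v i)) ^ 2 ≤
      RCLike.re ρ.trace * ∑ i, RCLike.re (star (v i) ⬝ᵥ R *ᵥ v i) ^ 2 := by
  classical
  have hρpsd : ρ.PosSemidef :=
    hρ ▸ posSemidef_sum _ fun i _ => posSemidef_vecMulVec_self_star (v i)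
  have hv (i : ι) : (ρ * (R * R)) *ᵥ v i = v i := by
    have h := mulVec_eq_zero_of_mul_sum_vecMulVec_eq_zero (A := 1 - ρ * (R * R)) v
      (by rw [← hρ, sub_mul, one_mul, hpinv, sub_self]) i
    rwa [sub_mulVec, one_mulVec, sub_eq_zero, eq_comm] at h
  have hM1 (i : ι) : (1 - M i).PosSemidef := by
    rw [← hMsum, ← Finset.sum_erase_add _ _ (Finset.mem_univ i), add_sub_cancel_right]
    exact posSemidef_sum _ fun j _ => hM j
  have htrace : ∑ i, RCLike.re (M i * ρ).trace = RCLike.re ρ.trace := by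
    rw [← map_sum, ← trace_sum, ← Finset.sum_mul, hMsum, Matrix.one_mul]
  rw [← htrace]
  exact Finset.sum_sq_le_sum_mul_sum_of_sq_le_mul _
    (fun i _ => (RCLike.nonneg_iff.mp ((hM i).trace_mul_nonneg hρpsd)).1)
    (fun i _ => sq_nonneg _)
    (fun i _ => re_dotProduct_mulVec_sq_le_re_trace_mul_sq hρpsd hR hRρ hpinv (hM i) (hM1 i) (hv i))

end PrettyGoodMeasurement

end Matrix

theorem pgm_success_ge_sq_opt_general {n m : ℕ}
    (p : Fin m → ℝ) (hp : ∀ i, 0 ≤ p i) (hp1 : ∑ i, p i = 1)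
    (ψ : Fin m → (Fin n → ℂ)) (hψ : ∀ i, star (ψ i) ⬝ᵥ ψ i = 1)
    (ρ : Matrix (Fin n) (Fin n) ℂ)
    (hρ : ρ = ∑ i, (p i : ℂ) • Matrix.vecMulVec (ψ i) (star (ψ i)))
    (R : Matrix (Fin n) (Fin n) ℂ)
    (hR : R.PosSemidef) (hRρ : R * ρ = ρ * R)
    (hpinv1 : ρ * (R * R) * ρ = ρ)
    (M : Fin m → Matrix (Fin n) (Fin n) ℂ)
    (hM : ∀ i, (M i).PosSemidef) (hMsum : ∑ i, M i = 1) :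
    (∑ i, p i * (star (ψ i) ⬝ᵥ (M i).mulVec (ψ i)).re) ^ 2
      ≤ ∑ i, (p i * (star (ψ i) ⬝ᵥ R.mulVec (ψ i)).re) ^ 2 := by
  set v : Fin m → Fin n → ℂ := fun i => (√(p i) : ℂ) • ψ i
  have hsqrt (i : Fin m) : star (√(p i) : ℂ) * √(p i) = p i := by
    rw [Complex.star_def, Complex.conj_ofReal, ← Complex.ofReal_mul, Real.mul_self_sqrt (hp i)]
  have hv (i : Fin m) (A : Matrix (Fin n) (Fin n) ℂ) :
      star (v i) ⬝ᵥ A *ᵥ v i = p i * (star (ψ i) ⬝ᵥ A *ᵥ ψ i) := by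
    simp only [v, star_smul, mulVec_smul, smul_dotProduct, dotProduct_smul, smul_eq_mul]
    rw [← hsqrt]
    ring
  have hρv : ρ = ∑ i, vecMulVec (v i) (star (v i)) := by
    simp only [hρ, v, star_smul, smul_vecMulVec, vecMulVec_smul, smul_smul, hsqrt]
  have htrace : ρ.trace.re = 1 := by
    simp only [hρ, trace_sum, trace_smul, trace_vecMulVec, dotProduct_comm (ψ _), hψ,
      smul_eq_mul, mul_one, Complex.re_sum, Complex.ofReal_re, hp1]
  have h := Matrix.sq_sum_re_dotProduct_mulVec_le_re_trace_mul_sum_sq v hρv hR hRρ hpinv1 hM hMsum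
  simpa only [hv, RCLike.re_to_complex, Complex.re_ofReal_mul, htrace, one_mul] using h

/-- Pretty Good Measurement achieves at least the square of the optimal success
probability.  Here `ψ i` are unit vectors, `p i` probabilities,
`ρ = Σ_i p_i |ψ_i⟩⟨ψ_i|`, and `R = ρ^{-1/2}` (inverse on the support of `ρ`),
characterized by: `R` is positive semidefinite, commutes with `ρ`, and `R²` is the
Moore–Penrose pseudoinverse of `ρ` (`ρ R² ρ = ρ` and `R² ρ R² = R²`).  For every POVM
`{M_i}` (each `M_i` psd, `Σ_i M_i = 1`), the average success probability
`Σ_i p_i ⟨ψ_i|M_i|ψ_i⟩` satisfies `(Σ_i p_i ⟨ψ_i|M_i|ψ_i⟩)² ≤ P^PGM`, where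
`P^PGM = Σ_i (p_i ⟨ψ_i|R|ψ_i⟩)² = Σ_i ⟨ψ'_i|R|ψ'_i⟩²`.  Taking the supremum over all
POVMs gives `P^opt(E)² ≤ P^PGM(E)`. -/
theorem pgm_success_ge_sq_opt {n m : ℕ}
    (p : Fin m → ℝ) (hp : ∀ i, 0 ≤ p i) (hp1 : ∑ i, p i = 1)
    (ψ : Fin m → (Fin n → ℂ)) (hψ : ∀ i, star (ψ i) ⬝ᵥ ψ i = 1)
    (ρ : Matrix (Fin n) (Fin n) ℂ)
    (hρ : ρ = ∑ i, (p i : ℂ) • Matrix.vecMulVec (ψ i) (star (ψ i)))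
    (R : Matrix (Fin n) (Fin n) ℂ)
    (hR : R.PosSemidef) (hRρ : R * ρ = ρ * R)
    (hpinv1 : ρ * (R * R) * ρ = ρ) (hpinv2 : (R * R) * ρ * (R * R) = R * R)
    (M : Fin m → Matrix (Fin n) (Fin n) ℂ)
    (hM : ∀ i, (M i).PosSemidef) (hMsum : ∑ i, M i = 1) :
    (∑ i, p i * (star (ψ i) ⬝ᵥ (M i).mulVec (ψ i)).re) ^ 2
      ≤ ∑ i, (p i * (star (ψ i) ⬝ᵥ R.mulVec (ψ i)).re) ^ 2 :=
  pgm_success_ge_sq_opt_general p hp hp1 ψ hψ ρ hρ R hR hRρ hpinv1 M hM hMsum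
end

section
/- Let E = {(p_i, |ψ_i⟩)}_{i∈[m]} be an ensemble of pure states, |ψ'_i⟩ = √p_i|ψ_i⟩, and G the m×m Gram matrix with G(i,j) = ⟨ψ'_i|ψ'_j⟩. Then the average success probability of the Pretty Good Measurement equals Σ_{i∈[m]} (√G)(i,i)², where √G is the positive semidefinite square root of G. -/
/-!
Write `B` for the matrix whose columns are the renormalized states `√p_j ψ_j`, so that
`ρ = B Bᴴ` and `G = Bᴴ B`. Since `R² ρ` is the orthogonal projection onto the support of `ρ`,
which contains the columns of `B`, the positive semidefinite matrix `S = Bᴴ R B` satisfies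
`S² = Bᴴ R (B Bᴴ) R B = Bᴴ (R² ρ) B = Bᴴ B = G`. Hence `S = √G`, and
`S i i = ⟨ψ'_i|R|ψ'_i⟩ = p_i ⟨ψ_i|R|ψ_i⟩`.
-/

open Matrix
open scoped ComplexOrder

noncomputable def Matrix.PosSemidef.sqrt {n : Type*} {𝕜 : Type*} [Fintype n] [DecidableEq n]
    [RCLike 𝕜] {A : Matrix n n 𝕜} (hA : A.PosSemidef) : Matrix n n 𝕜 :=
  hA.1.eigenvectorUnitary.1 * diagonal ((↑) ∘ (√·) ∘ hA.1.eigenvalues) *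
    (star hA.1.eigenvectorUnitary : Matrix n n 𝕜)

namespace Matrix

variable {n m 𝕜 : Type*} [Fintype n] [Fintype m] [RCLike 𝕜]

open scoped MatrixOrder in
theorem PosSemidef.eq_sqrt_of_mul_self_eq [DecidableEq n] {A S : Matrix n n 𝕜} (hA : A.PosSemidef)
    (hS : S.PosSemidef) (h : S * S = A) : S = hA.sqrt := by
  have hcfc : CFC.sqrt A = S := CFC.sqrt_unique h hS.nonneg
  rw [← hcfc, CFC.sqrt_eq_cfc, cfc_nnreal_eq_real _ A hA.nonneg, hA.1.cfc_eq]
  simp only [IsHermitian.cfc, PosSemidef.sqrt]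
  simp [Function.comp_def, hA.eigenvalues_nonneg]

theorem IsHermitian.mul_eq_self_of_mul_mul_conjTranspose_eq {Q : Matrix n n 𝕜}
    {B : Matrix n m 𝕜} (hQ : Q.IsHermitian) (h : Q * (B * Bᴴ) = B * Bᴴ) : Q * B = B := by
  have h' : B * Bᴴ * Q = B * Bᴴ := by
    simpa [conjTranspose_mul, hQ.eq, Matrix.mul_assoc] using congrArg (·ᴴ) h
  have hzero : (Q * B - B) * (Q * B - B)ᴴ = 0 := by
    rw [conjTranspose_sub, conjTranspose_mul, hQ.eq]
    calc (Q * B - B) * (Bᴴ * Q - Bᴴ)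
        = Q * (B * Bᴴ) * Q - Q * (B * Bᴴ) - B * Bᴴ * Q + B * Bᴴ := by
          simp only [Matrix.sub_mul, Matrix.mul_sub, Matrix.mul_assoc]; abel
      _ = 0 := by rw [h, h']; abel
  exact sub_eq_zero.mp (self_mul_conjTranspose_eq_zero.mp hzero)

theorem conjTranspose_mul_mul_mul_self_eq {R : Matrix n n 𝕜} {B : Matrix n m 𝕜}
    (hR : R.IsHermitian) (hcomm : R * (B * Bᴴ) = B * Bᴴ * R)
    (hginv : B * Bᴴ * (R * R) * (B * Bᴴ) = B * Bᴴ) :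
    Bᴴ * R * B * (Bᴴ * R * B) = Bᴴ * B := by
  set A := B * Bᴴ
  have hsq_comm : R * R * A = A * (R * R) := by
    rw [Matrix.mul_assoc, hcomm, ← Matrix.mul_assoc, hcomm, Matrix.mul_assoc]
  have hproj : (R * R * A).IsHermitian := by
    simp only [IsHermitian, A, conjTranspose_mul, conjTranspose_conjTranspose, hR.eq]
    rw [← Matrix.mul_assoc, hsq_comm]
    simp only [A, Matrix.mul_assoc]
  have hfix : R * R * A * B = B := by
    refine hproj.mul_eq_self_of_mul_mul_conjTranspose_eq ?_
    rw [hsq_comm, hginv]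
  calc Bᴴ * R * B * (Bᴴ * R * B) = Bᴴ * (R * A * R) * B := by simp only [A, Matrix.mul_assoc]
    _ = Bᴴ * (R * R * A * B) := by rw [Matrix.mul_assoc R A, ← hcomm]; simp only [Matrix.mul_assoc]
    _ = Bᴴ * B := by rw [hfix]

end Matrix

section Ensemble

theorem Complex.ofReal_sqrt_mul_self {x : ℝ} (hx : 0 ≤ x) : (√x : ℂ) * √x = x := by
  rw [← Complex.ofReal_mul, Real.mul_self_sqrt hx]

variable {n ι : Type*}

noncomputable def ensembleMatrix (p : ι → ℝ) (ψ : ι → n → ℂ) : Matrix n ι ℂ :=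
  of fun k j => (√(p j) : ℂ) * ψ j k

theorem ensembleMatrix_mul_conjTranspose [Fintype ι] {p : ι → ℝ} (hp : ∀ i, 0 ≤ p i)
    (ψ : ι → n → ℂ) :
    ensembleMatrix p ψ * (ensembleMatrix p ψ)ᴴ
      = ∑ i, (p i : ℂ) • vecMulVec (ψ i) (star (ψ i)) := by
  ext k l
  simp only [ensembleMatrix, mul_apply, conjTranspose_apply, Matrix.sum_apply, Matrix.smul_apply,
    vecMulVec_apply, of_apply, Pi.star_apply, smul_eq_mul, star_mul', Complex.star_def,
    Complex.conj_ofReal]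
  refine Finset.sum_congr rfl fun j _ => ?_
  rw [← Complex.ofReal_sqrt_mul_self (hp j)]
  ring

theorem conjTranspose_ensembleMatrix_mul_apply [Fintype n] (p : ι → ℝ) (ψ : ι → n → ℂ) (i j : ι) :
    ((ensembleMatrix p ψ)ᴴ * ensembleMatrix p ψ) i j
      = (√(p i) * √(p j) : ℂ) * (star (ψ i) ⬝ᵥ ψ j) := by
  simp only [ensembleMatrix, mul_apply, conjTranspose_apply, of_apply, dotProduct,
    Pi.star_apply, star_mul', Complex.star_def, Complex.conj_ofReal, Finset.mul_sum]
  refine Finset.sum_congr rfl fun k _ => ?_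
  ring

theorem conjTranspose_ensembleMatrix_mul_mul_apply_self [Fintype n] {p : ι → ℝ} (hp : ∀ i, 0 ≤ p i)
    (ψ : ι → n → ℂ) (R : Matrix n n ℂ) (i : ι) :
    ((ensembleMatrix p ψ)ᴴ * R * ensembleMatrix p ψ) i i
      = (p i : ℂ) * (star (ψ i) ⬝ᵥ R *ᵥ ψ i) := by
  simp only [ensembleMatrix, mul_apply, conjTranspose_apply, of_apply, dotProduct, mulVec,
    Pi.star_apply, star_mul', Complex.star_def, Complex.conj_ofReal, Finset.mul_sum,
    Finset.sum_mul]
  rw [Finset.sum_comm]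
  refine Finset.sum_congr rfl fun k _ => Finset.sum_congr rfl fun l _ => ?_
  rw [← Complex.ofReal_sqrt_mul_self (hp i)]
  ring

end Ensemble

/-- `R` stands for `ρ^{-1/2}` on the support of `ρ`, and the left side is
`Σ_i p_i |⟨ν_i|ψ_i⟩|²` with `|ν_i⟩ = R|ψ'_i⟩`. -/
theorem pgm_success_eq_sum_sqrt_gram_diag_sq_general {n m : ℕ}
    (p : Fin m → ℝ) (hp : ∀ i, 0 ≤ p i)
    (ψ : Fin m → (Fin n → ℂ))
    (ρ : Matrix (Fin n) (Fin n) ℂ)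
    (hρ : ρ = ∑ i, (p i : ℂ) • Matrix.vecMulVec (ψ i) (star (ψ i)))
    (R : Matrix (Fin n) (Fin n) ℂ)
    (hR : R.PosSemidef) (hRρ : R * ρ = ρ * R)
    (hpinv1 : ρ * (R * R) * ρ = ρ)
    (G : Matrix (Fin m) (Fin m) ℂ)
    (hGdef : ∀ i j, G i j = (Real.sqrt (p i) * Real.sqrt (p j) : ℂ) * (star (ψ i) ⬝ᵥ ψ j))
    (hG : G.PosSemidef) :
    ∑ i, (p i * (star (ψ i) ⬝ᵥ R.mulVec (ψ i)).re) ^ 2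
      = ∑ i, (hG.sqrt i i).re ^ 2 := by
  set B := ensembleMatrix p ψ
  have hρB : ρ = B * Bᴴ := hρ.trans (ensembleMatrix_mul_conjTranspose hp ψ).symm
  have hGB : G = Bᴴ * B := by
    ext i j; rw [hGdef, conjTranspose_ensembleMatrix_mul_apply]
  subst hρB hGB
  have hsqrt : Bᴴ * R * B = hG.sqrt :=
    hG.eq_sqrt_of_mul_self_eq (hR.conjTranspose_mul_mul_same B)
      (conjTranspose_mul_mul_mul_self_eq hR.1 hRρ hpinv1)
  refine Finset.sum_congr rfl fun i _ => ?_
  rw [← hsqrt, conjTranspose_ensembleMatrix_mul_mul_apply_self hp, Complex.re_ofReal_mul]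

/-- The average success probability of the Pretty Good Measurement equals
`Σ_i (√G)(i,i)²`, where `G(i,j) = ⟨ψ'_i|ψ'_j⟩` is the Gram matrix of the
renormalized states `|ψ'_i⟩ = √p_i |ψ_i⟩`.  Here `ρ = Σ_i |ψ'_i⟩⟨ψ'_i|` and
`R = ρ^{-1/2}` (inverse square root on the support, characterized as the psd matrix
commuting with `ρ` whose square is the Moore–Penrose pseudoinverse of `ρ`), so that
`P^PGM = Σ_i p_i |⟨ν_i|ψ_i⟩|² = Σ_i ⟨ψ'_i|R|ψ'_i⟩²` with `|ν_i⟩ = R|ψ'_i⟩`. -/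
theorem pgm_success_eq_sum_sqrt_gram_diag_sq {n m : ℕ}
    (p : Fin m → ℝ) (hp : ∀ i, 0 ≤ p i) (hp1 : ∑ i, p i = 1)
    (ψ : Fin m → (Fin n → ℂ)) (hψ : ∀ i, star (ψ i) ⬝ᵥ ψ i = 1)
    (ρ : Matrix (Fin n) (Fin n) ℂ)
    (hρ : ρ = ∑ i, (p i : ℂ) • Matrix.vecMulVec (ψ i) (star (ψ i)))
    (R : Matrix (Fin n) (Fin n) ℂ)
    (hR : R.PosSemidef) (hRρ : R * ρ = ρ * R)
    (hpinv1 : ρ * (R * R) * ρ = ρ) (hpinv2 : (R * R) * ρ * (R * R) = R * R)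
    (G : Matrix (Fin m) (Fin m) ℂ)
    (hGdef : ∀ i j, G i j = (Real.sqrt (p i) * Real.sqrt (p j) : ℂ) * (star (ψ i) ⬝ᵥ ψ j))
    (hG : G.PosSemidef) :
    ∑ i, (p i * (star (ψ i) ⬝ᵥ R.mulVec (ψ i)).re) ^ 2
      = ∑ i, (hG.sqrt i i).re ^ 2 :=
  pgm_success_eq_sum_sqrt_gram_diag_sq_general p hp ψ ρ hρ R hR hRρ hpinv1 G hGdef hG
end
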